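/- arXiv:math/0211068 — 2 statements merged into one kernel-verified Lean document; each statement's English description precedes it below -/
import Mathlib

section
/- Let d be a positive divisor of m and suppose σ^d = id. Set ζ_d := ζ^{m/d} (a primitive d-th root of unity). Let L_d(g,σ) be the loop algebra formed inside g ⊗_k k[z,z⁻¹] using the period d and the root of unity ζ_d, regarded as an algebra over R = k[t,t⁻¹] via t = z^d, and let L_m(g,σ) be the loop algebra formed using the period m and ζ, regarded as an algebra over R via t = z^m. Then the k-linear map determined by x ⊗ z^j ↦ x ⊗ z^{(m/d)j} (x ∈ g, j ∈ ℤ) is an injective k-algebra homomorphism of g ⊗ k[z,z⁻¹] into itself which is R-linear and restricts to an isomorphism of Lie algebras over R from L_d(g,σ) onto L_m(g,σ). -/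
/-!
The map `Φ` is `ψ ⊗ id_g`, where `ψ` is the `k`-algebra endomorphism `z ↦ z^(m/d)` of
`k[z,z⁻¹]`. Base change along an algebra map preserves brackets and turns `s •` into `ψ s •`,
which gives the Lie and `R`-linearity properties; `ψ` is injective and `k`-modules are flat,
so `Φ` is injective. For the image: `Φ` sends the generator `z^i ⊗ x` of `L_d` (with
`σ x = ζ^((m/d) i) x`) to the generator `z^((m/d) i) ⊗ x` of `L_m`. Conversely, if `x ≠ 0`
and `σ x = ζ^j x`, then `σ^d = 1` forces `ζ^(jd) = 1`, so `m ∣ jd`, i.e. `m/d ∣ j`, and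
`z^j ⊗ x` comes from `L_d`.
-/

open scoped TensorProduct
open LaurentPolynomial

set_option maxHeartbeats 1000000
set_option synthInstance.maxHeartbeats 400000

noncomputable section

namespace LoopPaper

variable {k : Type*} [Field k] {g : Type*} [LieRing g] [LieAlgebra k g]

/-- A linear automorphism of a Lie algebra is a Lie algebra automorphism if it
preserves brackets. -/
def IsLieAut (σ : g ≃ₗ[k] g) : Prop := ∀ x y : g, σ ⁅x, y⁆ = ⁅σ x, σ y⁆

theorem IsLieAut.one : IsLieAut (1 : g ≃ₗ[k] g) := fun _ _ => rfl

theorem IsLieAut.mul {σ τ : g ≃ₗ[k] g} (hσ : IsLieAut σ) (hτ : IsLieAut τ) :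
    IsLieAut (σ * τ) := fun x y => by
  show σ (τ ⁅x, y⁆) = ⁅σ (τ x), σ (τ y)⁆
  rw [hτ, hσ]

theorem IsLieAut.inv {σ : g ≃ₗ[k] g} (hσ : IsLieAut σ) : IsLieAut σ⁻¹ := fun x y => by
  apply σ.injective
  have h1 : ∀ z, σ (σ⁻¹ z) = z := fun z => σ.apply_symm_apply z
  rw [h1, hσ, h1, h1]

/-! ### The variable-scaling automorphism `z ↦ c z` of `k[z,z⁻¹]` -/

/-- The unit `c^n • z^n` of the Laurent polynomial ring. -/
def scaleUnit (c : kˣ) (n : ℤ) : (LaurentPolynomial k)ˣ where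
  val := ((c ^ n : kˣ) : k) • T n
  inv := ((c ^ (-n) : kˣ) : k) • T (-n)
  val_inv := by
    rw [smul_mul_smul_comm, ← T_add, ← Units.val_mul, ← zpow_add, add_neg_cancel, zpow_zero,
      Units.val_one, T_zero, one_smul]
  inv_val := by
    rw [smul_mul_smul_comm, ← T_add, ← Units.val_mul, ← zpow_add, neg_add_cancel, zpow_zero,
      Units.val_one, T_zero, one_smul]

/-- The homomorphism `n ↦ c^n • z^n` from `ℤ` to the units of `k[z,z⁻¹]`. -/
def scaleUnitHom (c : kˣ) : Multiplicative ℤ →* (LaurentPolynomial k)ˣ where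
  toFun n := scaleUnit c n.toAdd
  map_one' := Units.ext (by
    show ((c ^ (0 : ℤ) : kˣ) : k) • T (0 : ℤ) = 1
    rw [zpow_zero, Units.val_one, T_zero, one_smul])
  map_mul' a b := Units.ext (by
    show ((c ^ (a.toAdd + b.toAdd) : kˣ) : k) • T (a.toAdd + b.toAdd) =
      (((c ^ a.toAdd : kˣ) : k) • T a.toAdd) * (((c ^ b.toAdd : kˣ) : k) • T b.toAdd)
    rw [smul_mul_smul_comm, ← T_add, ← Units.val_mul, ← zpow_add])

/-- The `k`-algebra endomorphism of `k[z,z⁻¹]` with `z ↦ c z`. -/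
def scaleVar (c : kˣ) : LaurentPolynomial k →ₐ[k] LaurentPolynomial k :=
  AddMonoidAlgebra.lift k _ ℤ ((Units.coeHom _).comp (scaleUnitHom c))

theorem scaleVar_T (c : kˣ) (n : ℤ) : scaleVar c (T n) = ((c ^ n : kˣ) : k) • T n := by
  have h : (T n : LaurentPolynomial k) = AddMonoidAlgebra.of k ℤ (Multiplicative.ofAdd n) := rfl
  rw [h, scaleVar, AddMonoidAlgebra.lift_of]
  rfl

theorem scaleVar_comp (c d : kˣ) :
    (scaleVar c).comp (scaleVar d) = scaleVar (k := k) (c * d) := by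
  apply AddMonoidAlgebra.algHom_ext
  swap
  · first | exact Subsingleton.elim _ _ | (ext; simp)
  intro n
  have hT : (AddMonoidAlgebra.single n 1 : LaurentPolynomial k) = T n := rfl
  simp only [AlgHom.coe_comp, Function.comp_apply, hT]
  rw [scaleVar_T, map_smul, scaleVar_T, smul_smul, scaleVar_T]
  congr 1
  rw [mul_zpow, Units.val_mul, mul_comm]

theorem scaleVar_id : scaleVar (1 : kˣ) = AlgHom.id k (LaurentPolynomial k) := by
  apply AddMonoidAlgebra.algHom_ext
  swap
  · first | exact Subsingleton.elim _ _ | (ext; simp)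
  intro n
  have hT : (AddMonoidAlgebra.single n 1 : LaurentPolynomial k) = T n := rfl
  simp only [hT, AlgHom.coe_id, id_eq]
  rw [scaleVar_T, one_zpow, Units.val_one, one_smul]

/-- The `k`-algebra automorphism of `k[z,z⁻¹]` with `z ↦ c z`. -/
def scaleVarEquiv (c : kˣ) : LaurentPolynomial k ≃ₐ[k] LaurentPolynomial k :=
  AlgEquiv.ofAlgHom (scaleVar c) (scaleVar c⁻¹)
    (by rw [scaleVar_comp, mul_inv_cancel, scaleVar_id])
    (by rw [scaleVar_comp, inv_mul_cancel, scaleVar_id])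

theorem scaleVarEquiv_apply (c : kˣ) (p : LaurentPolynomial k) :
    scaleVarEquiv c p = scaleVar c p := rfl


/-- `R = k[t,t⁻¹]`, identified with the `k`-subalgebra of `S = k[z,z⁻¹]` generated by
`t = z^m` and `t⁻¹ = z^{-m}`. -/
def Rsub (k : Type*) [Field k] (m : ℕ) : Subalgebra k (LaurentPolynomial k) :=
  Algebra.adjoin k {T (m : ℤ), T (-(m : ℤ))}

/-- `g(S) = g ⊗_k S` is a Lie algebra over `k` (by restriction from `S`). -/
instance instLieAlgebraTensorBase : LieAlgebra k (LaurentPolynomial k ⊗[k] g) where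
  lie_smul c x y := by
    have h := lie_smul (algebraMap k (LaurentPolynomial k) c) x y
    rwa [algebraMap_smul, algebraMap_smul] at h

/-- The underlying submodule `⊕_{i ∈ ℤ} g_ī ⊗ z^i` of the loop algebra. -/
def loopCarrier (ζ : k) (σ : g ≃ₗ[k] g) : Submodule k (LaurentPolynomial k ⊗[k] g) :=
  Submodule.span k {p | ∃ (i : ℤ) (x : g), σ x = ζ ^ i • x ∧ p = T i ⊗ₜ[k] x}

theorem loop_lie_mem {ζ : k} (hζ0 : ζ ≠ 0) {σ : g ≃ₗ[k] g} (hbr : IsLieAut σ)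
    {x y : LaurentPolynomial k ⊗[k] g} (hx : x ∈ loopCarrier ζ σ) (hy : y ∈ loopCarrier ζ σ) :
    ⁅x, y⁆ ∈ loopCarrier ζ σ := by
  have key : ∀ p ∈ {p : LaurentPolynomial k ⊗[k] g |
      ∃ (i : ℤ) (x : g), σ x = ζ ^ i • x ∧ p = T i ⊗ₜ[k] x},
      ∀ q, q ∈ loopCarrier ζ σ → ⁅p, q⁆ ∈ loopCarrier ζ σ := by
    rintro p ⟨i, a, ha, rfl⟩ q hq
    unfold loopCarrier at hq ⊢
    induction hq using Submodule.span_induction with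
    | mem q hq =>
      obtain ⟨j, b, hb, rfl⟩ := hq
      rw [LieAlgebra.ExtendScalars.bracket_tmul, ← T_add]
      refine Submodule.subset_span ⟨i + j, ⁅a, b⁆, ?_, rfl⟩
      rw [hbr, ha, hb, smul_lie, lie_smul, smul_smul, ← zpow_add₀ hζ0]
    | zero =>
      have h0 : ⁅(T i ⊗ₜ[k] a : LaurentPolynomial k ⊗[k] g), (0 : LaurentPolynomial k ⊗[k] g)⁆ = 0 :=
        lie_zero (T i ⊗ₜ[k] a : LaurentPolynomial k ⊗[k] g)
      rw [h0]; exact zero_mem _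
    | add q r _ _ hq hr =>
      have h0 : ⁅(T i ⊗ₜ[k] a : LaurentPolynomial k ⊗[k] g), q + r⁆ = ⁅T i ⊗ₜ[k] a, q⁆ + ⁅T i ⊗ₜ[k] a, r⁆ :=
        lie_add (T i ⊗ₜ[k] a : LaurentPolynomial k ⊗[k] g) q r
      rw [h0]; exact add_mem hq hr
    | smul c q _ hq =>
      have h0 : ⁅(T i ⊗ₜ[k] a : LaurentPolynomial k ⊗[k] g), c • q⁆ = c • ⁅T i ⊗ₜ[k] a, q⁆ :=
        lie_smul c (T i ⊗ₜ[k] a : LaurentPolynomial k ⊗[k] g) q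
      rw [h0]; exact Submodule.smul_mem _ _ hq
  unfold loopCarrier at hx
  induction hx using Submodule.span_induction with
  | mem p hp => exact key p hp y hy
  | zero =>
    have h0 : ⁅(0 : LaurentPolynomial k ⊗[k] g), y⁆ = 0 := zero_lie y
    rw [h0]; exact zero_mem _
  | add p r _ _ hp hr =>
    have h0 : ⁅p + r, y⁆ = ⁅p, y⁆ + ⁅r, y⁆ := add_lie p r y
    rw [h0]; exact add_mem hp hr
  | smul c p _ hp =>
    have h0 : ⁅c • p, y⁆ = c • ⁅p, y⁆ := smul_lie c p y
    rw [h0]; exact Submodule.smul_mem _ _ hp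

/-- The loop algebra `L(g,σ) = ⊕_{i ∈ ℤ} g_ī ⊗ z^i`, a Lie subalgebra (over `k`)
of `g(S) = g ⊗_k S`.  Here `m` is a period of `σ` and `ζ` is the chosen root of unity. -/
def loopAlgebra (m : ℕ) (ζ : k) (hζ0 : ζ ≠ 0) (hζm : ζ ^ m = 1) (σ : g ≃ₗ[k] g)
    (hbr : IsLieAut σ) (hσ : σ ^ m = 1) : LieSubalgebra k (LaurentPolynomial k ⊗[k] g) where
  __ := loopCarrier ζ σ
  lie_mem' := fun hx hy => loop_lie_mem hζ0 hbr hx hy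

theorem mem_loopAlgebra_iff {m : ℕ} {ζ : k} {hζ0 : ζ ≠ 0} {hζm : ζ ^ m = 1} {σ : g ≃ₗ[k] g}
    {hbr : IsLieAut σ} {hσ : σ ^ m = 1} {x : LaurentPolynomial k ⊗[k] g} :
    x ∈ loopAlgebra m ζ hζ0 hζm σ hbr hσ ↔ x ∈ loopCarrier ζ σ := Iff.rfl

theorem T_smul_loop {ζ : k} (hζ0 : ζ ≠ 0) {σ : g ≃ₗ[k] g} {j : ℤ} (hj : ζ ^ j = 1)
    {x : LaurentPolynomial k ⊗[k] g} (hx : x ∈ loopCarrier ζ σ) :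
    (T j : LaurentPolynomial k) • x ∈ loopCarrier ζ σ := by
  unfold loopCarrier at hx ⊢
  induction hx using Submodule.span_induction with
  | mem p hp =>
    obtain ⟨i, a, ha, rfl⟩ := hp
    rw [TensorProduct.smul_tmul', smul_eq_mul, ← T_add]
    refine Submodule.subset_span ⟨j + i, a, ?_, rfl⟩
    rw [ha, zpow_add₀ hζ0, hj, one_mul]
  | zero => rw [smul_zero]; exact zero_mem _
  | add p q _ _ hp hq => rw [smul_add]; exact add_mem hp hq
  | smul c p _ hp =>
    rw [smul_comm]
    exact Submodule.smul_mem _ _ hp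

theorem Rsub_smul_loop {m : ℕ} {ζ : k} (hζ0 : ζ ≠ 0) (hζm : ζ ^ m = 1) {σ : g ≃ₗ[k] g}
    {r : LaurentPolynomial k} (hr : r ∈ Rsub k m) :
    ∀ x ∈ loopCarrier ζ σ, r • x ∈ loopCarrier (g := g) ζ σ := by
  induction hr using Algebra.adjoin_induction with
  | mem s hs =>
    intro x hx
    rcases hs with rfl | rfl
    · refine T_smul_loop hζ0 ?_ hx
      rw [zpow_natCast, hζm]
    · refine T_smul_loop hζ0 ?_ hx
      rw [zpow_neg, zpow_natCast, hζm, inv_one]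
  | algebraMap c =>
    intro x hx
    rw [algebraMap_smul]
    exact Submodule.smul_mem _ _ hx
  | add r s _ _ hr hs =>
    intro x hx
    rw [add_smul]
    exact add_mem (hr x hx) (hs x hx)
  | mul r s _ _ hr hs =>
    intro x hx
    rw [mul_smul]
    exact hr _ (hs x hx)


/-- The action of `R` on the loop algebra. -/
instance loopSMulR {m : ℕ} {ζ : k} {hζ0 : ζ ≠ 0} {hζm : ζ ^ m = 1} {σ : g ≃ₗ[k] g}
    {hbr : IsLieAut σ} {hσ : σ ^ m = 1} :
    SMul ↥(Rsub k m) ↥(loopAlgebra m ζ hζ0 hζm σ hbr hσ) where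
  smul r x := ⟨(r : LaurentPolynomial k) • (x : LaurentPolynomial k ⊗[k] g),
    Rsub_smul_loop hζ0 hζm r.2 _ x.2⟩

theorem loop_smul_coe {m : ℕ} {ζ : k} {hζ0 : ζ ≠ 0} {hζm : ζ ^ m = 1} {σ : g ≃ₗ[k] g}
    {hbr : IsLieAut σ} {hσ : σ ^ m = 1} (r : ↥(Rsub k m))
    (x : ↥(loopAlgebra m ζ hζ0 hζm σ hbr hσ)) :
    ((r • x : ↥(loopAlgebra m ζ hζ0 hζm σ hbr hσ)) : LaurentPolynomial k ⊗[k] g)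
      = (r : LaurentPolynomial k) • (x : LaurentPolynomial k ⊗[k] g) := rfl

/-- The loop algebra is a module over `R = k[t,t⁻¹] ⊆ k[z,z⁻¹]`. -/
instance loopModuleR {m : ℕ} {ζ : k} {hζ0 : ζ ≠ 0} {hζm : ζ ^ m = 1} {σ : g ≃ₗ[k] g}
    {hbr : IsLieAut σ} {hσ : σ ^ m = 1} :
    Module ↥(Rsub k m) ↥(loopAlgebra m ζ hζ0 hζm σ hbr hσ) where
  one_smul x := Subtype.ext (by simp [loop_smul_coe])
  mul_smul r s x := Subtype.ext (by simp [loop_smul_coe, mul_smul])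
  smul_zero r := Subtype.ext (by simp [loop_smul_coe])
  smul_add r x y := Subtype.ext (by simp [loop_smul_coe, smul_add])
  add_smul r s x := Subtype.ext (by simp [loop_smul_coe, add_smul])
  zero_smul x := Subtype.ext (by simp [loop_smul_coe])


/-- The inclusion of the loop algebra in `g(S)`, as an `R`-linear map. -/
def loopIncl (m : ℕ) (ζ : k) (hζ0 : ζ ≠ 0) (hζm : ζ ^ m = 1) (σ : g ≃ₗ[k] g)
    (hbr : IsLieAut σ) (hσ : σ ^ m = 1) :
    ↥(loopAlgebra m ζ hζ0 hζm σ hbr hσ) →ₗ[↥(Rsub k m)] (LaurentPolynomial k ⊗[k] g) where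
  toFun x := ↑x
  map_add' _ _ := rfl
  map_smul' _ _ := rfl

/-- The eigenspace `{x ∈ g : σ(x) = c x}`. -/
def eigSpace (σ : g ≃ₗ[k] g) (c : k) : Submodule k g where
  carrier := {x | σ x = c • x}
  add_mem' := by
    intro x y hx hy
    show σ (x + y) = c • (x + y)
    rw [map_add, hx, hy, smul_add]
  zero_mem' := by
    show σ 0 = c • (0 : g)
    rw [map_zero, smul_zero]
  smul_mem' := by
    intro t x hx
    show σ (t • x) = c • t • x
    rw [map_smul, hx, smul_comm]

/-- The `R`-algebra automorphism `id ⊗ ι_i` of `g(S)`, where `ι_i(z) = ζ^i z`. -/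
def idTensorIota (ζ : k) (hζ0 : ζ ≠ 0) (i : ℤ) :
    (LaurentPolynomial k ⊗[k] g) ≃ₗ[k] (LaurentPolynomial k ⊗[k] g) :=
  TensorProduct.congr (scaleVarEquiv (Units.mk0 ζ hζ0 ^ i)).toLinearEquiv (LinearEquiv.refl k g)

/-- A `k`-linear automorphism of `g(S)` lies in `Aut_S(g(S))` if it is `S`-linear and
preserves brackets. -/
def IsSAut (f : (LaurentPolynomial k ⊗[k] g) ≃ₗ[k] (LaurentPolynomial k ⊗[k] g)) : Prop :=
  (∀ (s : LaurentPolynomial k) (x : LaurentPolynomial k ⊗[k] g), f (s • x) = s • f x) ∧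
    ∀ x y : LaurentPolynomial k ⊗[k] g, f ⁅x, y⁆ = ⁅f x, f y⁆

/-- The action of `ī ∈ Γ = ℤ/mℤ` on `Aut_S(g(S))`:  `ⁱτ = (id ⊗ ι_i) ∘ τ ∘ (id ⊗ ι_i)⁻¹`. -/
def gammaAct (ζ : k) (hζ0 : ζ ≠ 0) (i : ℤ)
    (τ : (LaurentPolynomial k ⊗[k] g) ≃ₗ[k] (LaurentPolynomial k ⊗[k] g)) :
    (LaurentPolynomial k ⊗[k] g) ≃ₗ[k] (LaurentPolynomial k ⊗[k] g) :=
  ((idTensorIota (g := g) ζ hζ0 i).symm.trans τ).trans (idTensorIota ζ hζ0 i)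

/-- A family `u_ī`, `ī ∈ Γ = ℤ/mℤ` (presented as a function on integer representatives),
is a 1-cocycle on `Γ` in `Aut_S(g(S))` if each `u_i` is an `S`-algebra automorphism,
`u_i` depends only on `i` mod `m`, and `u_{i+j} = u_i ∘ ⁱ(u_j)`. -/
def IsCocycle (m : ℕ) (ζ : k) (hζ0 : ζ ≠ 0)
    (u : ℤ → ((LaurentPolynomial k ⊗[k] g) ≃ₗ[k] (LaurentPolynomial k ⊗[k] g))) : Prop :=
  (∀ i : ℤ, IsSAut (u i)) ∧ (∀ i j : ℤ, (i : ZMod m) = (j : ZMod m) → u i = u j) ∧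
    ∀ i j : ℤ, u (i + j) = (gammaAct ζ hζ0 i (u j)).trans (u i)

/-- The fixed point set `g(S)_u = {x : (u_ī ∘ (id ⊗ ι_i)) x = x for all ī}` of a 1-cocycle. -/
def cocycleFixed (ζ : k) (hζ0 : ζ ≠ 0)
    (u : ℤ → ((LaurentPolynomial k ⊗[k] g) ≃ₗ[k] (LaurentPolynomial k ⊗[k] g))) :
    Set (LaurentPolynomial k ⊗[k] g) :=
  {x | ∀ i : ℤ, u i (idTensorIota ζ hζ0 i x) = x}

variable (k) in
def expand (e : ℤ) : LaurentPolynomial k →ₐ[k] LaurentPolynomial k :=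
  AddMonoidAlgebra.mapDomainAlgHom k k (AddMonoidHom.mulLeft e)

theorem expand_T (e n : ℤ) : expand k e (T n) = T (e * n) := by
  simp only [expand, T, AddMonoidAlgebra.mapDomainAlgHom_apply,
    AddMonoidAlgebra.mapDomain_single]
  rfl

theorem expand_injective {e : ℤ} (he : e ≠ 0) : Function.Injective (expand k e) :=
  AddMonoidAlgebra.mapDomain_injective (mul_right_injective₀ he)

theorem tensor_ext_T {M N : Type*} [AddCommGroup M] [Module k M] [AddCommGroup N] [Module k N]
    {φ ψ : LaurentPolynomial k ⊗[k] M →ₗ[k] N} (h : ∀ j x, φ (T j ⊗ₜ x) = ψ (T j ⊗ₜ x)) :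
    φ = ψ := by
  ext j x
  exact h j x

section AlgHomRTensor

variable {A B M L : Type*} [CommRing A] [Algebra k A] [CommRing B] [Algebra k B]
  [AddCommGroup M] [Module k M] [LieRing L] [LieAlgebra k L]

theorem rTensor_algHom_smul (f : A →ₐ[k] B) (a : A) (x : A ⊗[k] M) :
    f.toLinearMap.rTensor M (a • x) = f a • f.toLinearMap.rTensor M x := by
  induction x using TensorProduct.induction_on with
  | zero => simp only [smul_zero, map_zero]
  | tmul b y => simp [TensorProduct.smul_tmul']
  | add x y hx hy => simp only [smul_add, map_add, hx, hy]

theorem rTensor_algHom_lie (f : A →ₐ[k] B) (x y : A ⊗[k] L) :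
    f.toLinearMap.rTensor L ⁅x, y⁆ = ⁅f.toLinearMap.rTensor L x, f.toLinearMap.rTensor L y⁆ := by
  induction x using TensorProduct.induction_on with
  | zero => simp only [zero_lie, map_zero]
  | add x x' hx hx' => simp only [add_lie, map_add, hx, hx']
  | tmul a u =>
    induction y using TensorProduct.induction_on with
    | zero => simp only [lie_zero, map_zero]
    | add y y' hy hy' => simp only [lie_add, map_add, hy, hy']
    | tmul b v => simp [LieAlgebra.ExtendScalars.bracket_tmul]

end AlgHomRTensor

theorem pow_eq_one_of_apply_eq_smul {M : Type*} [AddCommGroup M] [Module k M] {σ : M ≃ₗ[k] M}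
    {d : ℕ} (hσ : σ ^ d = 1) {c : k} {x : M} (hx : σ x = c • x) (hx0 : x ≠ 0) : c ^ d = 1 := by
  have hiter : ∀ n : ℕ, σ^[n] x = c ^ n • x := by
    intro n
    induction n with
    | zero => simp
    | succ n ih => rw [Function.iterate_succ_apply', ih, map_smul, hx, smul_smul, pow_succ]
  apply smul_left_injective k hx0
  simpa [← LinearEquiv.pow_apply, hσ] using (hiter d).symm

theorem _root_.IsPrimitiveRoot.div_dvd_of_zpow_pow_eq_one {ζ : k} {m d : ℕ}
    (hζ : IsPrimitiveRoot ζ m) (hdvd : d ∣ m) (hd : d ≠ 0) {j : ℤ} (h : (ζ ^ j) ^ d = 1) :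
    ((m / d : ℕ) : ℤ) ∣ j := by
  have hmj : (m : ℤ) ∣ j * d := (hζ.zpow_eq_one_iff_dvd _).mp (by rw [zpow_mul, zpow_natCast, h])
  rwa [← Nat.div_mul_cancel hdvd, Nat.cast_mul,
    mul_dvd_mul_iff_right (Int.natCast_ne_zero.mpr hd)] at hmj

theorem map_rTensor_expand_loopCarrier {m d : ℕ} (hdvd : d ∣ m) (hd : d ≠ 0) {ζ : k}
    (hζ : IsPrimitiveRoot ζ m) {σ : g ≃ₗ[k] g} (hσ : σ ^ d = 1) :
    (loopCarrier (ζ ^ (m / d)) σ).map ((expand k (m / d : ℕ)).toLinearMap.rTensor g) =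
      loopCarrier ζ σ := by
  rw [loopCarrier, loopCarrier, Submodule.map_span]
  congr 1
  ext p
  constructor
  · rintro ⟨_, ⟨i, x, hx, rfl⟩, rfl⟩
    refine ⟨(m / d : ℕ) * i, x, ?_, by simp [expand_T]⟩
    rw [hx, ← zpow_natCast, ← zpow_mul]
  · rintro ⟨j, x, hx, rfl⟩
    by_cases hx0 : x = 0
    · exact ⟨T 0 ⊗ₜ 0, ⟨0, 0, by simp, rfl⟩, by simp [hx0]⟩
    obtain ⟨i, rfl⟩ :=
      hζ.div_dvd_of_zpow_pow_eq_one hdvd hd (pow_eq_one_of_apply_eq_smul hσ hx hx0)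
    refine ⟨T i ⊗ₜ x, ⟨i, x, ?_, rfl⟩, by simp [expand_T]⟩
    rw [hx, ← zpow_natCast, ← zpow_mul]

/-- If `d ∣ m`, `σ^d = 1` and `ζ_d := ζ^{m/d}`, the `k`-linear map
determined by `x ⊗ z^j ↦ x ⊗ z^{(m/d)j}` is an injective `k`-algebra homomorphism of
`g ⊗ k[z,z⁻¹]` into itself, it is `R`-linear (where `R` acts on the source through
`t = z^d` and on the target through `t = z^m`), and it restricts to an isomorphism of
Lie algebras over `R` from `L_d(g,σ)` onto `L_m(g,σ)`. -/
theorem statement0 {k : Type*} [Field k] {g : Type*} [LieRing g] [LieAlgebra k g]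
    (m d : ℕ) (hm : 0 < m) (hdvd : d ∣ m)
    (ζ : k) (hζ : IsPrimitiveRoot ζ m)
    (σ : g ≃ₗ[k] g) (hbr : IsLieAut σ) (hσd : σ ^ d = 1)
    (Φ : (LaurentPolynomial k ⊗[k] g) →ₗ[k] (LaurentPolynomial k ⊗[k] g))
    (hΦ : ∀ (j : ℤ) (x : g), Φ (T j ⊗ₜ[k] x) = T (((m / d : ℕ) : ℤ) * j) ⊗ₜ[k] x) :
    Function.Injective Φ ∧
    (∀ x y : LaurentPolynomial k ⊗[k] g, Φ ⁅x, y⁆ = ⁅Φ x, Φ y⁆) ∧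
    (∀ (i : ℤ) (x : LaurentPolynomial k ⊗[k] g),
      Φ ((T ((d : ℤ) * i) : LaurentPolynomial k) • x)
        = (T ((m : ℤ) * i) : LaurentPolynomial k) • Φ x) ∧
    Submodule.map Φ
        (loopAlgebra d (ζ ^ (m / d))
          (pow_ne_zero _ (hζ.ne_zero hm.ne'))
          (by rw [← pow_mul, Nat.div_mul_cancel hdvd, hζ.pow_eq_one])
          σ hbr hσd).toSubmodule
      = (loopAlgebra m ζ (hζ.ne_zero hm.ne') hζ.pow_eq_one σ hbr
          (by obtain ⟨c, rfl⟩ := hdvd; rw [pow_mul, hσd, one_pow])).toSubmodule := by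
  have hd : d ≠ 0 := (Nat.pos_of_dvd_of_pos hdvd hm).ne'
  have he : ((m / d : ℕ) : ℤ) ≠ 0 :=
    Nat.cast_ne_zero.mpr (Nat.div_pos (Nat.le_of_dvd hm hdvd) (Nat.pos_of_ne_zero hd)).ne'
  obtain rfl : Φ = (expand k (m / d : ℕ)).toLinearMap.rTensor g :=
    tensor_ext_T fun j x => by simp [hΦ, expand_T]
  refine ⟨Module.Flat.rTensor_preserves_injective_linearMap _ (expand_injective he),
    rTensor_algHom_lie _, fun i x => ?_, map_rTensor_expand_loopCarrier hdvd hd hζ hσd⟩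
  rw [rTensor_algHom_smul, expand_T, ← mul_assoc, ← Nat.cast_mul, Nat.div_mul_cancel hdvd]

end LoopPaper
end
end

section
/- Let K be a commutative associative unital k-algebra and let L be a perfect Lie algebra over K. Then every k-linear endomorphism χ of L satisfying χ([x,y]) = [x,χ(y)] for all x, y ∈ L is automatically K-linear; that is, Ctd_k(L) = Ctd_K(L). -/
namespace LieAlgebra

variable {K L : Type*} [CommRing K] [LieRing L] [LieAlgebra K L]

theorem map_smul_lie_of_map_lie_eq_lie_map (χ : L →+ L) (hχ : ∀ x y : L, χ ⁅x, y⁆ = ⁅x, χ y⁆)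
    (a : K) (u v : L) : χ (a • ⁅u, v⁆) = a • χ ⁅u, v⁆ := by
  rw [← smul_lie, hχ, smul_lie, hχ]

/-- The defect `x ↦ χ (a • x) - a • χ x` is additive and vanishes on brackets, hence on their
`ℤ`-span. -/
theorem map_smul_of_span_lie_eq_top
    (hperf : Submodule.span ℤ {w : L | ∃ x y : L, ⁅x, y⁆ = w} = ⊤)
    (χ : L →+ L) (hχ : ∀ x y : L, χ ⁅x, y⁆ = ⁅x, χ y⁆) (a : K) (x : L) :
    χ (a • x) = a • χ x := by
  let smulA : L →+ L := DistribSMul.toAddMonoidHom L a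
  let defect : L →+ L := χ.comp smulA - smulA.comp χ
  have hspan : Submodule.span ℤ {w : L | ∃ x y : L, ⁅x, y⁆ = w} ≤
      LinearMap.ker defect.toIntLinearMap := by
    rw [Submodule.span_le]
    rintro _ ⟨u, v, rfl⟩
    simp [defect, smulA, map_smul_lie_of_map_lie_eq_lie_map χ hχ]
  have hx : x ∈ LinearMap.ker defect.toIntLinearMap := hspan (hperf ▸ Submodule.mem_top)
  simpa [defect, smulA, sub_eq_zero] using LinearMap.mem_ker.mp hx

end LieAlgebra

theorem statement10_general {k : Type*} [Field k]
    {K : Type*} [CommRing K] [Algebra k K]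
    {L : Type*} [LieRing L] [LieAlgebra K L] [Module k L] [IsScalarTower k K L]
    (hperf : Submodule.span ℤ {w : L | ∃ x y : L, ⁅x, y⁆ = w} = ⊤)
    (χ : L →ₗ[k] L) (hχ : ∀ x y : L, χ ⁅x, y⁆ = ⁅x, χ y⁆) :
    ∀ (a : K) (x : L), χ (a • x) = a • χ x :=
  LieAlgebra.map_smul_of_span_lie_eq_top hperf χ.toAddMonoidHom hχ

/-- If `K` is a commutative associative unital `k`-algebra and `L`
is a perfect Lie algebra over `K`, then every `k`-linear endomorphism `χ` of `L` with
`χ[x,y] = [x, χ y]` for all `x, y` is automatically `K`-linear; that is,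
`Ctd_k(L) = Ctd_K(L)`.  (Perfectness is taken, as in the paper, to mean that `L`
is the `ℤ`-span of its commutators.) -/
theorem statement10 {k : Type*} [Field k] [CharZero k]
    {K : Type*} [CommRing K] [Algebra k K]
    {L : Type*} [LieRing L] [LieAlgebra K L] [Module k L] [IsScalarTower k K L]
    (hperf : Submodule.span ℤ {w : L | ∃ x y : L, ⁅x, y⁆ = w} = ⊤)
    (χ : L →ₗ[k] L) (hχ : ∀ x y : L, χ ⁅x, y⁆ = ⁅x, χ y⁆) :
    ∀ (a : K) (x : L), χ (a • x) = a • χ x :=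
  statement10_general hperf χ hχ
end
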